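/- arXiv:1109.3786 — 9 statements merged into one kernel-verified Lean document; each statement's English description precedes it below -/
import Mathlib

section
/- Let k ≥ 12 be even and let A be the ((k-4)/2) × ((k-4)/2) matrix over ℚ with entries A_{ij} = C(2j, 2i) - C(2j, k-2-2i) + δ(i+j = (k-2)/2), for 1 ≤ i,j ≤ (k-4)/2, where C denotes the binomial coefficient and δ is 1 if the condition holds and 0 otherwise. Let D be the diagonal matrix with D_{ii} = 1/C(k-2, 2i) and B the matrix with B_{ij} = C(2j, 2i). Then the matrix (transpose of A)·D·B is symmetric. -/
/-!
Write `A = B - R + J`, where `R` is `B` with its rows listed in reverse order and `J` is the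
reversal permutation matrix; this works because `k - 2 - 2i` is again an even index. Then
`AᵀDB = BᵀDB - RᵀDB + JᵀDB`. The first term is symmetric because `D` is diagonal, the second
because `D` is invariant under the reversal, and the entries of `JᵀDB` are
`C(2j, k-2-2i) / C(k-2, 2i)`, which is symmetric in `i, j` by the trinomial identity
`C(N, a) C(N - a, b) = C(N, b) C(N - b, a)`.
-/

open Matrix

theorem Nat.choose_mul_choose_sub_comm (N a b : ℕ) :
    N.choose a * (N - a).choose b = N.choose b * (N - b).choose a := by
  have ha := Nat.choose_mul (n := N) (Nat.le_add_right a b)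
  have hb := Nat.choose_mul (n := N) (Nat.le_add_left b a)
  rw [Nat.add_sub_cancel_left] at ha
  rw [Nat.add_sub_cancel] at hb
  rw [← ha, ← hb, Nat.choose_symm_add]

theorem Nat.cast_choose_inv_mul_choose_sub_comm {K : Type*} [Field K] [CharZero K] {N a b : ℕ}
    (ha : a ≤ N) (hb : b ≤ N) :
    (N.choose a : K)⁻¹ * (N - b).choose a = (N.choose b : K)⁻¹ * (N - a).choose b := by
  have hca : (N.choose a : K) ≠ 0 := Nat.cast_ne_zero.mpr (Nat.choose_pos ha).ne'
  have hcb : (N.choose b : K) ≠ 0 := Nat.cast_ne_zero.mpr (Nat.choose_pos hb).ne'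
  field_simp
  rw [mul_comm]
  exact_mod_cast (Nat.choose_mul_choose_sub_comm N a b).symm

namespace Matrix

variable {ι κ R : Type*} [Fintype ι] [CommSemiring R]

theorem IsSymm.transpose_mul_mul {M : Matrix ι ι R} (hM : M.IsSymm) (B : Matrix ι κ R) :
    (Bᵀ * M * B).IsSymm := by
  rw [IsSymm, transpose_mul, transpose_mul, transpose_transpose, hM.eq, Matrix.mul_assoc]

variable [DecidableEq ι]

theorem isSymm_transpose_submatrix_mul_diagonal_mul {σ : Equiv.Perm ι}
    (hσ : Function.Involutive σ) {d : ι → R} (hd : ∀ i, d (σ i) = d i)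
    (B : Matrix ι κ R) : ((B.submatrix σ id)ᵀ * diagonal d * B).IsSymm := by
  refine IsSymm.ext fun x y => ?_
  rw [mul_apply, mul_apply]
  simp only [mul_diagonal, transpose_apply, submatrix_apply, id]
  exact Fintype.sum_equiv σ _ _ fun l => by rw [hσ l, hd]; ring

theorem transpose_one_submatrix_mul (σ : Equiv.Perm ι) (M : Matrix ι κ R) :
    ((1 : Matrix ι ι R).submatrix σ id)ᵀ * M = M.submatrix σ.symm id := by
  rw [transpose_submatrix, transpose_one, one_submatrix_mul]
  rfl

end Matrix

theorem Fin.two_mul_rev_succ_eq_sub {n : ℕ} (i : Fin n) :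
    2 * ((Fin.rev i).1 + 1) = 2 * n + 2 - 2 * (i.1 + 1) := by
  rw [Fin.val_rev]
  omega

theorem Fin.two_mul_succ_eq_sub_rev {n : ℕ} (i : Fin n) :
    2 * (i.1 + 1) = 2 * n + 2 - 2 * ((Fin.rev i).1 + 1) := by
  rw [Fin.val_rev]
  omega

-- The paper's matrices for weight `k = 2n + 4`; the index `i : Fin n` stands for `i + 1`.
namespace EvenBinomial

variable (K : Type*) [Field K] (n : ℕ)

def A : Matrix (Fin n) (Fin n) K :=
  of fun i j => (Nat.choose (2 * (j.1 + 1)) (2 * (i.1 + 1)) : K)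
    - (Nat.choose (2 * (j.1 + 1)) (2 * n + 2 - 2 * (i.1 + 1)) : K)
    + (if (i.1 + 1) + (j.1 + 1) = n + 1 then 1 else 0)

def B : Matrix (Fin n) (Fin n) K :=
  of fun i j => (Nat.choose (2 * (j.1 + 1)) (2 * (i.1 + 1)) : K)

def d : Fin n → K :=
  fun i => (Nat.choose (2 * n + 2) (2 * (i.1 + 1)) : K)⁻¹

theorem A_eq :
    A K n = B K n - (B K n).submatrix Fin.revPerm id
      + (1 : Matrix _ _ K).submatrix Fin.revPerm id := by
  ext i j
  have hrev : Fin.rev i = j ↔ (i.1 + 1) + (j.1 + 1) = n + 1 := by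
    rw [Fin.ext_iff, Fin.val_rev]
    omega
  simp only [A, B, of_apply, Matrix.sub_apply, Matrix.add_apply, submatrix_apply, id,
    Fin.revPerm_apply, one_apply, hrev, ← Fin.two_mul_rev_succ_eq_sub i]

theorem d_rev (i : Fin n) : d K n (Fin.rev i) = d K n i := by
  rw [d, d, Fin.two_mul_rev_succ_eq_sub i, Nat.choose_symm (by omega)]

theorem isSymm_transpose_revPerm_mul_diagonal_mul [CharZero K] :
    (((1 : Matrix _ _ K).submatrix Fin.revPerm id)ᵀ * diagonal (d K n) * B K n).IsSymm := by
  rw [Matrix.mul_assoc, transpose_one_submatrix_mul]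
  refine IsSymm.ext fun x y => ?_
  simp only [submatrix_apply, diagonal_mul, B, d, of_apply, Fin.revPerm_symm,
    Fin.revPerm_apply, id]
  rw [Fin.two_mul_succ_eq_sub_rev x, Fin.two_mul_succ_eq_sub_rev y]
  exact Nat.cast_choose_inv_mul_choose_sub_comm (by omega) (by omega)

theorem isSymm_transpose_A_mul_diagonal_mul_B [CharZero K] :
    ((A K n)ᵀ * diagonal (d K n) * B K n).IsSymm := by
  rw [A_eq]
  simp only [transpose_add, transpose_sub, Matrix.add_mul, Matrix.sub_mul]
  exact (((isSymm_diagonal _).transpose_mul_mul _).sub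
    (isSymm_transpose_submatrix_mul_diagonal_mul Fin.rev_involutive (d_rev K n) _)).add
    (isSymm_transpose_revPerm_mul_diagonal_mul K n)

end EvenBinomial

theorem tADB_symmetric
    (k : ℕ) (hk : 12 ≤ k) (hke : Even k)
    (A D B : Matrix (Fin ((k - 4) / 2)) (Fin ((k - 4) / 2)) ℚ)
    (hA : ∀ i j : Fin ((k - 4) / 2),
      A i j = (Nat.choose (2 * (j.1 + 1)) (2 * (i.1 + 1)) : ℚ)
        - (Nat.choose (2 * (j.1 + 1)) (k - 2 - 2 * (i.1 + 1)) : ℚ)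
        + (if (i.1 + 1) + (j.1 + 1) = (k - 2) / 2 then 1 else 0))
    (hD : D = Matrix.diagonal (fun i : Fin ((k - 4) / 2) =>
      ((Nat.choose (k - 2) (2 * (i.1 + 1)) : ℚ))⁻¹))
    (hB : ∀ i j : Fin ((k - 4) / 2),
      B i j = (Nat.choose (2 * (j.1 + 1)) (2 * (i.1 + 1)) : ℚ)) :
    (Aᵀ * D * B).IsSymm := by
  generalize hn : (k - 4) / 2 = n at *
  have hhalf : (k - 2) / 2 = n + 1 := by obtain ⟨m, rfl⟩ := hke; omega
  have hsub : k - 2 = 2 * n + 2 := by obtain ⟨m, rfl⟩ := hke; omega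
  rw [hhalf, hsub] at hA
  rw [hsub] at hD
  obtain rfl : A = EvenBinomial.A ℚ n := Matrix.ext hA
  obtain rfl : B = EvenBinomial.B ℚ n := Matrix.ext hB
  subst hD
  exact EvenBinomial.isSymm_transpose_A_mul_diagonal_mul_B ℚ n
end

section
/- The transpose of the 4×4 rational matrix A with rows (1, 6, 15, 28), (0, 1, 15, 42), (0, 0, -14, -42), (0, -6, -15, -27) has kernel spanned by the vector (0, 168, 150, 28). -/
open Matrix

theorem weight12_transpose_kernel
    (A : Matrix (Fin 4) (Fin 4) ℚ)
    (hA : A = !![1, 6, 15, 28; 0, 1, 15, 42; 0, 0, -14, -42; 0, -6, -15, -27]) :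
    ∀ v : Fin 4 → ℚ, Aᵀ.mulVec v = 0 ↔ ∃ c : ℚ, v = c • ![0, 168, 150, 28] := by
  subst hA
  intro v
  constructor
  · intro h
    have h0 := congrFun h 0
    have h1 := congrFun h 1
    have h2 := congrFun h 2
    have h3 := congrFun h 3
    simp [mulVec, dotProduct, Fin.sum_univ_four] at h0 h1 h2 h3
    refine ⟨v 3 / 28, ?_⟩
    funext i
    fin_cases i <;> simp <;> linarith
  · rintro ⟨c, rfl⟩
    funext j
    fin_cases j <;>
      simp [mulVec, dotProduct, Fin.sum_univ_four, vecHead, vecTail] <;> ring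
end

section
/- Let k ≥ 12 be even, set N = (k-4)/2, and let A be the N×N matrix A_{ij} = C(2j,2i) - C(2j,k-2-2i) + δ(i+j = (k-2)/2), D the diagonal matrix with entries 1/C(k-2,2i), and B the matrix B_{ij} = C(2j,2i). Then the kernel of the transpose of A equals the image of the kernel of A under the invertible linear map D·B, i.e. Ker(tA) = D·B·(Ker A). -/
/-!
Let `P` be the permutation matrix of the reversal `i ↦ N + 1 - i`. Since `k - 2 - 2i = 2(N + 1 - i)`,
the matrix is `A = B - P B + P`, and as `Pᵀ = P`,
`Aᵀ D B = Bᵀ (D - P D) B + P D B`.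
Both summands are symmetric: `P D` because the weights `1 / C(k-2, 2i)` are invariant under
reversal, and `P D B` because its entries `C(2j, k-2-2i) / C(k-2, 2i)` are symmetric in `i, j` by
`C(m, a) C(a, m - b) = C(m, b) C(b, m - a)`. If `Aᵀ M` is symmetric and `M` is invertible, then
`Mᵀ A = Aᵀ M` shows that `M` maps `Ker A` onto `Ker Aᵀ`.
-/

open Matrix

theorem Nat.choose_mul_choose_sub_comm_s9 {m a b : ℕ} (ha : a ≤ m) (hb : b ≤ m) :
    m.choose a * a.choose (m - b) = m.choose b * b.choose (m - a) := by
  rcases lt_or_ge (a + b) m with h | h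
  · rw [choose_eq_zero_of_lt (by omega : a < m - b), choose_eq_zero_of_lt (by omega : b < m - a),
      Nat.mul_zero, Nat.mul_zero]
  · rw [choose_mul (by omega : m - b ≤ a), choose_symm hb, ← choose_symm (by omega : m - a ≤ b)]
    congr 2 <;> omega

theorem Nat.cast_choose_sub_div_choose_comm (K : Type*) [Field K] [CharZero K] {m a b : ℕ}
    (ha : a ≤ m) (hb : b ≤ m) :
    (b.choose (m - a) : K) / m.choose a = (a.choose (m - b) : K) / m.choose b := by
  have hma : (m.choose a : K) ≠ 0 := by exact_mod_cast (Nat.choose_pos ha).ne'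
  have hmb : (m.choose b : K) ≠ 0 := by exact_mod_cast (Nat.choose_pos hb).ne'
  rw [div_eq_div_iff hma hmb, mul_comm, mul_comm _ (m.choose a : K)]
  exact_mod_cast (Nat.choose_mul_choose_sub_comm_s9 ha hb).symm

namespace Matrix

variable {n R : Type*} [Fintype n] [DecidableEq n]

theorem transpose_mulVec_eq_zero_iff_of_isSymm [CommRing R] {A M : Matrix n n R}
    (hM : IsUnit M.det) (hAM : (Aᵀ * M).IsSymm) (v : n → R) :
    Aᵀ *ᵥ v = 0 ↔ ∃ w, A *ᵥ w = 0 ∧ v = M *ᵥ w := by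
  have hswap : Mᵀ * A = Aᵀ * M := by simpa [transpose_mul] using hAM.eq
  have hMT : Function.Injective Mᵀ.mulVec :=
    mulVec_injective_of_isUnit ((isUnit_iff_isUnit_det _).2 (by rwa [det_transpose]))
  constructor
  · intro hv
    have hv' : v = M *ᵥ (M⁻¹ *ᵥ v) := by rw [mulVec_mulVec, mul_nonsing_inv _ hM, one_mulVec]
    refine ⟨M⁻¹ *ᵥ v, hMT ?_, hv'⟩
    rw [mulVec_mulVec, hswap, ← mulVec_mulVec, ← hv', hv, mulVec_zero]
  · rintro ⟨w, hw, rfl⟩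
    rw [mulVec_mulVec, ← hswap, ← mulVec_mulVec, hw, mulVec_zero]

omit [DecidableEq n] in
theorem isSymm_transpose_mul_mul [CommSemiring R] {M : Matrix n n R} (hM : M.IsSymm)
    (B : Matrix n n R) : (Bᵀ * M * B).IsSymm := by
  simp [IsSymm, transpose_mul, hM.eq, Matrix.mul_assoc]

omit [Fintype n] in
theorem isSymm_permMatrix {σ : Equiv.Perm n} (hσ : Function.Involutive σ) [Zero R] [One R] :
    (σ.permMatrix R).IsSymm := by
  rw [IsSymm, transpose_permMatrix, Equiv.Perm.inv_def,
    Function.Involutive.symm_eq_self_of_involutive σ hσ]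

theorem isSymm_permMatrix_mul_diagonal [CommSemiring R] {σ : Equiv.Perm n}
    (hσ : Function.Involutive σ) {d : n → R} (hd : ∀ i, d (σ i) = d i) :
    (σ.permMatrix R * diagonal d).IsSymm := by
  refine IsSymm.ext fun i j => ?_
  simp only [PEquiv.toMatrix_toPEquiv_mul, submatrix_apply, id, diagonal_apply, hd]
  by_cases h : σ i = j
  · subst h
    simp [hσ i, hd]
  · have h' : σ j ≠ i := fun h' => h (h' ▸ hσ j)
    simp [h, h']

theorem isSymm_transpose_sub_mul_add_mul [CommRing R] {B D P : Matrix n n R} (hP : P.IsSymm)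
    (hD : D.IsSymm) (hPD : (P * D).IsSymm) (hPDB : (P * D * B).IsSymm) :
    ((B - P * B + P)ᵀ * (D * B)).IsSymm := by
  have h : (B - P * B + P)ᵀ * (D * B) = Bᵀ * (D - P * D) * B + P * D * B := by
    rw [transpose_add, transpose_sub, transpose_mul, hP.eq]
    noncomm_ring
  rw [h]
  exact (isSymm_transpose_mul_mul (hD.sub hPD) B).add hPDB

end Matrix

theorem Fin.two_mul_rev_add_one {n : ℕ} (i : Fin n) :
    2 * (i.rev.1 + 1) = 2 * (n + 1) - 2 * (i.1 + 1) := by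
  rw [Fin.val_rev]
  omega

section EvenChoose

variable (K : Type*) [Field K] [CharZero K] (n : ℕ)

/-- The paper's `B`; with `evenChooseWeight` as the diagonal of `D`, indices are shifted to start
at `0` and `2 * (n + 1)` plays the role of `k - 2`. -/
def evenChooseMatrix : Matrix (Fin n) (Fin n) K :=
  of fun i j => ((2 * (j.1 + 1)).choose (2 * (i.1 + 1)) : K)

def evenChooseWeight (i : Fin n) : K :=
  ((2 * (n + 1)).choose (2 * (i.1 + 1)) : K)⁻¹

theorem det_evenChooseMatrix : (evenChooseMatrix K n).det = 1 := by
  rw [det_of_isUpperTriangular]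
  · simp [evenChooseMatrix]
  · intro i j (hij : j < i)
    simp only [evenChooseMatrix, of_apply, Nat.cast_eq_zero]
    exact Nat.choose_eq_zero_of_lt (by omega)

omit [CharZero K] in
theorem evenChooseWeight_rev (i : Fin n) :
    evenChooseWeight K n i.rev = evenChooseWeight K n i := by
  rw [evenChooseWeight, evenChooseWeight, Fin.two_mul_rev_add_one, Nat.choose_symm (by omega)]

theorem isUnit_det_diagonal_evenChooseWeight_mul :
    IsUnit (diagonal (evenChooseWeight K n) * evenChooseMatrix K n).det := by
  rw [det_mul, det_evenChooseMatrix, mul_one, det_diagonal, isUnit_iff_ne_zero,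
    Finset.prod_ne_zero_iff]
  intro i _
  exact inv_ne_zero (by exact_mod_cast (Nat.choose_pos (by omega)).ne')

theorem isSymm_revPerm_mul_diagonal_evenChooseWeight_mul :
    (Fin.revPerm.permMatrix K * diagonal (evenChooseWeight K n) * evenChooseMatrix K n).IsSymm := by
  refine IsSymm.ext fun i j => ?_
  rw [Matrix.mul_assoc, PEquiv.toMatrix_toPEquiv_mul]
  simp only [submatrix_apply, id, diagonal_mul, Fin.revPerm_apply, evenChooseWeight,
    evenChooseMatrix, of_apply, Fin.two_mul_rev_add_one]
  rw [Nat.choose_symm (by omega), Nat.choose_symm (by omega), ← div_eq_inv_mul, ← div_eq_inv_mul]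
  exact (Nat.cast_choose_sub_div_choose_comm K (by omega) (by omega)).symm

theorem isSymm_transpose_mul_diagonal_evenChooseWeight_mul :
    ((evenChooseMatrix K n - Fin.revPerm.permMatrix K * evenChooseMatrix K n
        + Fin.revPerm.permMatrix K)ᵀ *
      (diagonal (evenChooseWeight K n) * evenChooseMatrix K n)).IsSymm :=
  isSymm_transpose_sub_mul_add_mul (isSymm_permMatrix Fin.rev_involutive)
    (isSymm_diagonal _)
    (isSymm_permMatrix_mul_diagonal Fin.rev_involutive (evenChooseWeight_rev K n))
    (isSymm_revPerm_mul_diagonal_evenChooseWeight_mul K n)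

end EvenChoose

theorem ker_transpose_eq_DB_ker
    (k : ℕ) (hk : 12 ≤ k) (hke : Even k)
    (A D B : Matrix (Fin ((k - 4) / 2)) (Fin ((k - 4) / 2)) ℚ)
    (hA : ∀ i j : Fin ((k - 4) / 2),
      A i j = (Nat.choose (2 * (j.1 + 1)) (2 * (i.1 + 1)) : ℚ)
        - (Nat.choose (2 * (j.1 + 1)) (k - 2 - 2 * (i.1 + 1)) : ℚ)
        + (if (i.1 + 1) + (j.1 + 1) = (k - 2) / 2 then 1 else 0))
    (hD : D = Matrix.diagonal (fun i : Fin ((k - 4) / 2) =>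
      ((Nat.choose (k - 2) (2 * (i.1 + 1)) : ℚ))⁻¹))
    (hB : ∀ i j : Fin ((k - 4) / 2),
      B i j = (Nat.choose (2 * (j.1 + 1)) (2 * (i.1 + 1)) : ℚ)) :
    ∀ v : Fin ((k - 4) / 2) → ℚ,
      Aᵀ.mulVec v = 0 ↔ ∃ w : Fin ((k - 4) / 2) → ℚ,
        A.mulVec w = 0 ∧ v = (D * B).mulVec w := by
  obtain ⟨m, hm⟩ := hke
  have hk2 : k - 2 = 2 * ((k - 4) / 2 + 1) := by omega
  have hB' : B = evenChooseMatrix ℚ _ := Matrix.ext hB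
  have hD' : D = diagonal (evenChooseWeight ℚ _) := by rw [hD, hk2]; rfl
  have hA' : A = B - Fin.revPerm.permMatrix ℚ * B + Fin.revPerm.permMatrix ℚ := by
    ext i j
    have hrev : k - 2 - 2 * (i.1 + 1) = 2 * (i.rev.1 + 1) := by rw [Fin.val_rev]; omega
    have hdelta : (i.1 + 1) + (j.1 + 1) = (k - 2) / 2 ↔ i.rev = j := by
      rw [Fin.ext_iff, Fin.val_rev]; omega
    rw [hA, hrev, PEquiv.toMatrix_toPEquiv_mul]
    simp [hB, hdelta]
  subst hA' hB' hD'
  exact transpose_mulVec_eq_zero_iff_of_isSymm (isUnit_det_diagonal_evenChooseWeight_mul ℚ _)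
    (isSymm_transpose_mul_diagonal_evenChooseWeight_mul ℚ _)
end

section
/- Let k ≥ 12 with k ≡ 0 (mod 4), let N = (k-4)/2, and let A be the N×N rational matrix with A_{ij} = C(2j,2i) - C(2j,k-2-2i) + δ(i+j=(k-2)/2). For 1 ≤ i,j ≤ N/2, one has A_{ij} + A_{i,(k-2)/2-j} + A_{(k-2)/2-i,j} + A_{(k-2)/2-i,(k-2)/2-j} = 2·δ(i=j). -/
/-!
Write `k - 2 = 2m`. Then `A = B + D` where `B i j = C(2j,2i) - C(2j,2(m-i))` changes sign under
`i ↦ m - i`, so its four-term symmetrization vanishes, and `D` is the indicator of the antidiagonal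
`i + j = m`, whose symmetrization is `2δ(i=j) + 2δ(i+j=m)`, and `i + j < m` throughout the block.
-/

section ReflectionSum

variable {R : Type*}

def reflectionSum [Add R] (m : ℕ) (A : ℕ → ℕ → R) (i j : ℕ) : R :=
  A i j + A i (m - j) + A (m - i) j + A (m - i) (m - j)

theorem reflectionSum_add [AddCommMonoid R] (m : ℕ) (A B : ℕ → ℕ → R) (i j : ℕ) :
    reflectionSum m (A + B) i j = reflectionSum m A i j + reflectionSum m B i j := by
  simp only [reflectionSum, Pi.add_apply]
  abel

theorem reflectionSum_eq_zero_of_neg [AddCommGroup R] {m : ℕ} {A : ℕ → ℕ → R} {i : ℕ}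
    (h : ∀ j, A (m - i) j = -A i j) (j : ℕ) : reflectionSum m A i j = 0 := by
  simp only [reflectionSum, h]
  abel

def evenBinomialDiff [Ring R] (m i j : ℕ) : R :=
  (Nat.choose (2 * j) (2 * i) : R) - Nat.choose (2 * j) (2 * (m - i))

theorem evenBinomialDiff_sub_left [Ring R] {m i : ℕ} (hi : i ≤ m) (j : ℕ) :
    (evenBinomialDiff m (m - i) j : R) = -evenBinomialDiff m i j := by
  rw [evenBinomialDiff, evenBinomialDiff, Nat.sub_sub_self hi, neg_sub]

def antidiagIndicator [Zero R] [One R] (m i j : ℕ) : R :=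
  if i + j = m then 1 else 0

theorem reflectionSum_antidiagIndicator [CommSemiring R] {m i j : ℕ} (hi : i ≤ m) (hj : j ≤ m) :
    reflectionSum m (antidiagIndicator m) i j
      = 2 * ((if i = j then 1 else 0) + (if i + j = m then 1 else 0) : R) := by
  have h₁ : (i + (m - j) = m) = (i = j) := propext (by omega)
  have h₂ : (m - i + j = m) = (i = j) := propext (by omega)
  have h₃ : (m - i + (m - j) = m) = (i + j = m) := propext (by omega)
  simp only [reflectionSum, antidiagIndicator, h₁, h₂, h₃]
  ring

end ReflectionSum

theorem upper_left_block_identity_general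
    (k : ℕ) (hk4 : k % 4 = 0)
    (A : ℕ → ℕ → ℚ)
    (hA : ∀ i j : ℕ, A i j = (Nat.choose (2 * j) (2 * i) : ℚ)
        - (Nat.choose (2 * j) (k - 2 - 2 * i) : ℚ)
        + (if i + j = (k - 2) / 2 then 1 else 0)) :
    ∀ i j : ℕ, 1 ≤ i → i ≤ ((k - 4) / 2) / 2 → 1 ≤ j → j ≤ ((k - 4) / 2) / 2 →
      A i j + A i ((k - 2) / 2 - j) + A ((k - 2) / 2 - i) j
          + A ((k - 2) / 2 - i) ((k - 2) / 2 - j)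
        = 2 * (if i = j then 1 else 0) := by
  intro i j _ hi _ hj
  obtain ⟨m, hm⟩ : ∃ m, k - 2 = 2 * m := ⟨(k - 2) / 2, by omega⟩
  have hA_split : A = evenBinomialDiff m + antidiagIndicator m := by
    funext i j
    rw [hA, hm, ← Nat.mul_sub, Nat.mul_div_cancel_left m two_pos]
    rfl
  have him : i ≤ m := by omega
  rw [show (k - 2) / 2 = m by omega]
  change reflectionSum m A i j = _
  rw [hA_split, reflectionSum_add,
    reflectionSum_eq_zero_of_neg (evenBinomialDiff_sub_left him),
    reflectionSum_antidiagIndicator him (by omega), if_neg (show i + j ≠ m by omega)]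
  ring

theorem upper_left_block_identity
    (k : ℕ) (hk : 12 ≤ k) (hk4 : k % 4 = 0)
    (A : ℕ → ℕ → ℚ)
    (hA : ∀ i j : ℕ, A i j = (Nat.choose (2 * j) (2 * i) : ℚ)
        - (Nat.choose (2 * j) (k - 2 - 2 * i) : ℚ)
        + (if i + j = (k - 2) / 2 then 1 else 0)) :
    ∀ i j : ℕ, 1 ≤ i → i ≤ ((k - 4) / 2) / 2 → 1 ≤ j → j ≤ ((k - 4) / 2) / 2 →
      A i j + A i ((k - 2) / 2 - j) + A ((k - 2) / 2 - i) j
          + A ((k - 2) / 2 - i) ((k - 2) / 2 - j)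
        = 2 * (if i = j then 1 else 0) :=
  upper_left_block_identity_general k hk4 A hA
end

section
/- Let k ≥ 12 with k ≡ 0 (mod 4) and N = (k-4)/2, and let A_{ij} = C(2j,2i) - C(2j,k-2-2i) + δ(i+j=(k-2)/2). For 1 ≤ i ≤ N/2 and 1 ≤ j ≤ N/2, one has -A_{ij} + A_{i,(k-2)/2-j} - A_{(k-2)/2-i,j} + A_{(k-2)/2-i,(k-2)/2-j} = 0. -/
theorem upper_right_block_zero
    (k : ℕ) (hk : 12 ≤ k) (hk4 : k % 4 = 0)
    (A : ℕ → ℕ → ℚ)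
    (hA : ∀ i j : ℕ, A i j = (Nat.choose (2 * j) (2 * i) : ℚ)
        - (Nat.choose (2 * j) (k - 2 - 2 * i) : ℚ)
        + (if i + j = (k - 2) / 2 then 1 else 0)) :
    ∀ i j : ℕ, 1 ≤ i → i ≤ ((k - 4) / 2) / 2 → 1 ≤ j → j ≤ ((k - 4) / 2) / 2 →
      -A i j + A i ((k - 2) / 2 - j) - A ((k - 2) / 2 - i) j
          + A ((k - 2) / 2 - i) ((k - 2) / 2 - j) = 0 := by
  intro i j hi1 hi2 hj1 hj2
  set m := (k - 2) / 2 with hm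
  have hk2 : k = 2 * m + 2 := by omega
  have him : i ≤ m := by omega
  have hjm : j ≤ m := by omega
  rw [hA, hA, hA, hA]
  have e1 : k - 2 - 2 * i = 2 * (m - i) := by omega
  have e2 : k - 2 - 2 * (m - i) = 2 * i := by omega
  rw [e1, e2]
  simp only [show (m - i + (m - j) = m) ↔ (i + j = m) from by omega,
    show (m - i + j = m) ↔ (i + (m - j) = m) from by omega]
  ring
end

section
/- Every vector (a_1, ..., a_N) in the kernel of the 4×4 weight-12 matrix A (rows (1,6,15,28), (0,1,15,42), (0,0,-14,-42), (0,-6,-15,-27)) satisfies the antisymmetry a_i = -a_{N+1-i} for all i, where N = 4. -/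
theorem weight12_kernel_antisymmetric
    (A : Matrix (Fin 4) (Fin 4) ℚ)
    (hA : A = !![1, 6, 15, 28; 0, 1, 15, 42; 0, 0, -14, -42; 0, -6, -15, -27]) :
    ∀ v : Fin 4 → ℚ, A.mulVec v = 0 → ∀ i : Fin 4, v i = -v i.rev := by
  subst hA
  intro v hv i
  have h0 := congrFun hv 0
  have h1 := congrFun hv 1
  have h2 := congrFun hv 2
  have h3 := congrFun hv 3
  simp [Matrix.mulVec, dotProduct, Fin.sum_univ_four] at h0 h1 h2 h3
  fin_cases i <;> simp [Fin.rev] <;> linarith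
end

section
/- In ℚ⟨x,y⟩ with the Poisson bracket {f,g} = [f,g] + D_f(g) - D_g(f) (where D_f is the derivation with D_f(x)=0, D_f(y)=[y,f]), for any polynomials f, g one has [D_f, D_g] = D_{{f,g}} as derivations of ℚ⟨x,y⟩, i.e. D_f∘D_g - D_g∘D_f = D_{[f,g] + D_f(g) - D_g(f)}. -/
/-! Commutators of derivations are derivations, and a derivation of a free algebra is determined
by its values on the generators. So it suffices to compare `⁅D_f, D_g⁆` with `D_{{f,g}}` on `x`,
where both vanish, and on `y`, where expanding `D_f (D_g y) = D_f ⁅y, g⁆` by the Leibniz rule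
gives `⁅y, ⁅f, g⁆ + D_f g - D_g f⁆`. -/

noncomputable abbrev FA : Type := MonoidAlgebra ℚ (FreeMonoid (Fin 2))

noncomputable def fx : FA := MonoidAlgebra.of ℚ (FreeMonoid (Fin 2)) (FreeMonoid.of 0)

noncomputable def fy : FA := MonoidAlgebra.of ℚ (FreeMonoid (Fin 2)) (FreeMonoid.of 1)

section Leibniz

variable {R A : Type*} [Semiring R] [Ring A] [Module R A]

def IsLeibniz (D : Module.End R A) : Prop :=
  ∀ a b : A, D (a * b) = D a * b + a * D b

namespace IsLeibniz

variable {D D' : Module.End R A}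

theorem map_one_eq_zero (hD : IsLeibniz D) : D 1 = 0 := by
  simpa using hD 1 1

theorem lie (hD : IsLeibniz D) (hD' : IsLeibniz D') : IsLeibniz ⁅D, D'⁆ := by
  intro a b
  simp only [Ring.lie_def, LinearMap.sub_apply, Module.End.mul_apply]
  rw [hD' a b, hD a b, map_add, map_add, hD, hD, hD', hD']
  noncomm_ring

theorem lie_apply_of_apply_eq_lie {y f g : A} (hD : IsLeibniz D) (hD' : IsLeibniz D')
    (hf : D y = ⁅y, f⁆) (hg : D' y = ⁅y, g⁆) :
    ⁅D, D'⁆ y = ⁅y, ⁅f, g⁆ + D g - D' f⁆ := by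
  simp only [Ring.lie_def, LinearMap.sub_apply, Module.End.mul_apply] at hf hg ⊢
  rw [hf, hg, map_sub, map_sub, hD, hD, hD', hD', hf, hg]
  noncomm_ring

theorem ext_freeMonoid {k α : Type*} [Ring k]
    {D D' : Module.End k (MonoidAlgebra k (FreeMonoid α))}
    (hD : IsLeibniz D) (hD' : IsLeibniz D')
    (h : ∀ i, D (MonoidAlgebra.of k _ (FreeMonoid.of i)) =
      D' (MonoidAlgebra.of k _ (FreeMonoid.of i))) :
    D = D' := by
  have h_of : ∀ m, D (MonoidAlgebra.of k _ m) = D' (MonoidAlgebra.of k _ m) := by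
    intro m
    induction m using FreeMonoid.inductionOn' with
    | one => rw [map_one, hD.map_one_eq_zero, hD'.map_one_eq_zero]
    | of_mul i m ih => rw [map_mul, hD, hD', h i, ih]
  refine LinearMap.ext fun a => ?_
  induction a using MonoidAlgebra.induction_on with
  | of m => exact h_of m
  | add p q hp hq => rw [map_add, map_add, hp, hq]
  | smul r p hp => rw [map_smul, map_smul, hp]

end IsLeibniz

end Leibniz

theorem bracket_of_derivations_is_poisson
    (f g : FA) (Df Dg Dh : FA →ₗ[ℚ] FA)
    (hDf : ∀ a b : FA, Df (a * b) = Df a * b + a * Df b)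
    (hDfx : Df fx = 0) (hDfy : Df fy = fy * f - f * fy)
    (hDg : ∀ a b : FA, Dg (a * b) = Dg a * b + a * Dg b)
    (hDgx : Dg fx = 0) (hDgy : Dg fy = fy * g - g * fy)
    (hDh : ∀ a b : FA, Dh (a * b) = Dh a * b + a * Dh b)
    (hDhx : Dh fx = 0)
    (hDhy : Dh fy = fy * (f * g - g * f + Df g - Dg f)
      - (f * g - g * f + Df g - Dg f) * fy) :
    ∀ a : FA, Df (Dg a) - Dg (Df a) = Dh a := by
  have hlie : ⁅Df, Dg⁆ = Dh := by
    refine (IsLeibniz.lie hDf hDg).ext_freeMonoid hDh fun i => ?_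
    fin_cases i
    · change ⁅Df, Dg⁆ fx = Dh fx
      rw [Ring.lie_def, LinearMap.sub_apply, Module.End.mul_apply, Module.End.mul_apply,
        hDfx, hDgx, hDhx, map_zero, map_zero, sub_zero]
    · change ⁅Df, Dg⁆ fy = Dh fy
      rw [IsLeibniz.lie_apply_of_apply_eq_lie hDf hDg (hDfy.trans (Ring.lie_def fy f).symm)
        (hDgy.trans (Ring.lie_def fy g).symm), hDhy, Ring.lie_def, Ring.lie_def]
  intro a
  simpa only [Ring.lie_def, LinearMap.sub_apply, Module.End.mul_apply] using
    LinearMap.congr_fun hlie a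
end

section
/- The stuffle product on the free ℚ-module spanned by words in {y_1, y_2, ...}, defined by 1*w = w*1 = w and (y_i u)*(y_j v) = y_i(u*(y_j v)) + y_j((y_i u)*v) + y_{i+j}(u*v), is associative: (u*v)*w = u*(v*w) for all words u, v, w. -/
/-- The stuffle (harmonic) product of two words in the letters `y_i` (`i` a positive
integer), with values in the free `ℚ`-module spanned by such words. -/
noncomputable def stuffle : List ℕ+ → List ℕ+ → (List ℕ+ →₀ ℚ)
  | [], w => Finsupp.single w 1
  | i :: u, [] => Finsupp.single (i :: u) 1
  | i :: u, j :: v =>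
      Finsupp.mapDomain (fun w => i :: w) (stuffle u (j :: v))
      + Finsupp.mapDomain (fun w => j :: w) (stuffle (i :: u) v)
      + Finsupp.mapDomain (fun w => (i + j) :: w) (stuffle u v)
  termination_by u v => u.length + v.length

/-- The bilinear extension of the stuffle product to the free `ℚ`-module on words. -/
noncomputable def stuffleExt (a b : List ℕ+ →₀ ℚ) : List ℕ+ →₀ ℚ :=
  a.sum fun u cu => b.sum fun v cv => (cu * cv) • stuffle u v

/-!
Associativity is proved by induction on the total length of `u`, `v`, `w`. The defining
recursion of `stuffle` lifts, by bilinearity, to products whose left (resp. right) factor is a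
combination of words all starting with the same letter. Applying it twice, both
`(y_i u * y_j v) * y_k w` and `y_i u * (y_j v * y_k w)` expand into the same seven terms, one for
each nonempty set of the letters `y_i, y_j, y_k` merged into the first letter, and the
corresponding remainders agree by induction.
-/

open Finsupp

local infixl:70 " ⋆ " => stuffleExt

local notation:max "σ " i:max x:max => Finsupp.mapDomain (List.cons i) x

theorem stuffle_nil_left (v : List ℕ+) : stuffle [] v = single v 1 := by
  rw [stuffle]

theorem stuffle_nil_right (u : List ℕ+) : stuffle u [] = single u 1 := by
  cases u <;> rw [stuffle]

theorem stuffle_cons_cons (i j : ℕ+) (u v : List ℕ+) :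
    stuffle (i :: u) (j :: v) =
      σ i (stuffle u (j :: v)) + σ j (stuffle (i :: u) v) + σ (i + j) (stuffle u v) := by
  rw [stuffle]

section Bilinear

variable (a a' b b' : List ℕ+ →₀ ℚ)

theorem stuffleExt_zero_left : 0 ⋆ b = 0 := by
  simp [stuffleExt]

theorem stuffleExt_zero_right : a ⋆ 0 = 0 := by
  simp [stuffleExt]

theorem stuffleExt_add_left : (a + a') ⋆ b = a ⋆ b + a' ⋆ b := by
  refine sum_add_index' (fun _ => by simp) fun _ c c' => ?_
  simp only [add_mul, add_smul, sum_add]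

theorem stuffleExt_add_right : a ⋆ (b + b') = a ⋆ b + a ⋆ b' := by
  rw [stuffleExt, stuffleExt, stuffleExt, ← sum_add]
  refine sum_congr fun _ _ => sum_add_index' (fun _ => by simp) fun _ c c' => ?_
  simp only [mul_add, add_smul]

theorem stuffleExt_single_single (u v : List ℕ+) (c d : ℚ) :
    single u c ⋆ single v d = (c * d) • stuffle u v := by
  rw [stuffleExt, sum_single_index (by simp), sum_single_index (by simp)]

theorem stuffleExt_single_nil_left : single [] 1 ⋆ b = b := by
  induction b using induction_linear with
  | zero => exact stuffleExt_zero_right _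
  | add b b' hb hb' => rw [stuffleExt_add_right, hb, hb']
  | single v c => rw [stuffleExt_single_single, stuffle_nil_left, smul_single, one_mul, smul_eq_mul,
      mul_one]

theorem stuffleExt_single_nil_right : a ⋆ single [] 1 = a := by
  induction a using induction_linear with
  | zero => exact stuffleExt_zero_left _
  | add a a' ha ha' => rw [stuffleExt_add_left, ha, ha']
  | single u c => rw [stuffleExt_single_single, stuffle_nil_right, smul_single, mul_one,
      smul_eq_mul, mul_one]

end Bilinear

theorem stuffleExt_mapDomain_cons_left (i k : ℕ+) (a : List ℕ+ →₀ ℚ) (w : List ℕ+) :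
    σ i a ⋆ single (k :: w) 1 =
      σ i (a ⋆ single (k :: w) 1) + σ k (σ i a ⋆ single w 1) + σ (i + k) (a ⋆ single w 1) := by
  induction a using induction_linear with
  | zero => simp only [mapDomain_zero, stuffleExt_zero_left, add_zero]
  | add a a' ha ha' =>
    simp only [mapDomain_add, stuffleExt_add_left, ha, ha']
    abel
  | single u c =>
    simp only [mapDomain_single, stuffleExt_single_single, stuffle_cons_cons, smul_add,
      mapDomain_smul]

theorem stuffleExt_mapDomain_cons_right (i j : ℕ+) (u : List ℕ+) (b : List ℕ+ →₀ ℚ) :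
    single (i :: u) 1 ⋆ σ j b =
      σ i (single u 1 ⋆ σ j b) + σ j (single (i :: u) 1 ⋆ b) + σ (i + j) (single u 1 ⋆ b) := by
  induction b using induction_linear with
  | zero => simp only [mapDomain_zero, stuffleExt_zero_right, add_zero]
  | add b b' hb hb' =>
    simp only [mapDomain_add, stuffleExt_add_right, hb, hb']
    abel
  | single v c =>
    simp only [mapDomain_single, stuffleExt_single_single, stuffle_cons_cons, smul_add,
      mapDomain_smul]

section ThreeWords

variable (i j k : ℕ+) (u v w : List ℕ+)

theorem stuffleExt_stuffle_cons_cons_single_cons :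
    stuffle (i :: u) (j :: v) ⋆ single (k :: w) 1 =
      σ i (stuffle u (j :: v) ⋆ single (k :: w) 1) + σ j (stuffle (i :: u) v ⋆ single (k :: w) 1)
        + σ (i + j) (stuffle u v ⋆ single (k :: w) 1) + σ k (stuffle (i :: u) (j :: v) ⋆ single w 1)
        + σ (i + k) (stuffle u (j :: v) ⋆ single w 1) + σ (j + k) (stuffle (i :: u) v ⋆ single w 1)
        + σ (i + j + k) (stuffle u v ⋆ single w 1) := by
  rw [stuffle_cons_cons i j u v]
  simp only [stuffleExt_add_left, stuffleExt_mapDomain_cons_left, mapDomain_add]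
  abel

theorem stuffleExt_single_cons_stuffle_cons_cons :
    single (i :: u) 1 ⋆ stuffle (j :: v) (k :: w) =
      σ i (single u 1 ⋆ stuffle (j :: v) (k :: w)) + σ j (single (i :: u) 1 ⋆ stuffle v (k :: w))
        + σ (i + j) (single u 1 ⋆ stuffle v (k :: w)) + σ k (single (i :: u) 1 ⋆ stuffle (j :: v) w)
        + σ (i + k) (single u 1 ⋆ stuffle (j :: v) w) + σ (j + k) (single (i :: u) 1 ⋆ stuffle v w)
        + σ (i + j + k) (single u 1 ⋆ stuffle v w) := by
  rw [stuffle_cons_cons j k v w]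
  simp only [stuffleExt_add_right, stuffleExt_mapDomain_cons_right, mapDomain_add]
  rw [← add_assoc i j k]
  abel

end ThreeWords

theorem stuffle_assoc (u v w : List ℕ+) :
    stuffleExt (stuffle u v) (Finsupp.single w 1)
      = stuffleExt (Finsupp.single u 1) (stuffle v w) :=
  match u, v, w with
  | [], v, w => by
    rw [stuffle_nil_left, stuffleExt_single_nil_left, stuffleExt_single_single, mul_one, one_smul]
  | u, [], w => by rw [stuffle_nil_right, stuffle_nil_left]
  | u, v, [] => by
    rw [stuffleExt_single_nil_right, stuffle_nil_right, stuffleExt_single_single, mul_one, one_smul]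
  | i :: u, j :: v, k :: w => by
    rw [stuffleExt_stuffle_cons_cons_single_cons, stuffleExt_single_cons_stuffle_cons_cons,
      stuffle_assoc u (j :: v) (k :: w), stuffle_assoc (i :: u) v (k :: w),
      stuffle_assoc u v (k :: w), stuffle_assoc (i :: u) (j :: v) w, stuffle_assoc u (j :: v) w,
      stuffle_assoc (i :: u) v w, stuffle_assoc u v w]
termination_by u.length + v.length + w.length
end

section
/- Let k ≥ 12 with k ≡ 2 (mod 4), set N = (k-4)/2 and m = (k-2)/4, and let A_{ij} = C(2j,2i) - C(2j,k-2-2i) + δ(i+j=(k-2)/2). Then for 1 ≤ j ≤ (k-6)/4 one has A_{m,j} + A_{m,(k-2)/2-j} = 0; one has A_{m,m} = 1; and for (k+2)/4 ≤ j ≤ N one has -A_{m,j} + A_{m,(k-2)/2-j} = 0. -/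
/-! In the middle row `i = m` one has `k - 2 - 2i = 2i`, so the two binomial terms cancel and
the row reduces to its Kronecker term: it is the indicator of the column `j = m`. The three
claims then only compare column indices with `m`. -/

theorem middle_row_eq_indicator {k m : ℕ} (hk : k = 4 * m + 2) (j : ℕ) :
    (Nat.choose (2 * j) (2 * m) : ℚ) - (Nat.choose (2 * j) (k - 2 - 2 * m) : ℚ)
      + (if m + j = (k - 2) / 2 then 1 else 0) = if j = m then 1 else 0 := by
  have hmid : k - 2 - 2 * m = 2 * m := by omega
  have hdiag : (m + j = (k - 2) / 2) ↔ j = m := by omega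
  simp only [hmid, sub_self, zero_add, hdiag]

theorem middle_row_computation_general
    (k : ℕ) (hk4 : k % 4 = 2)
    (A : ℕ → ℕ → ℚ)
    (hA : ∀ i j : ℕ, A i j = (Nat.choose (2 * j) (2 * i) : ℚ)
        - (Nat.choose (2 * j) (k - 2 - 2 * i) : ℚ)
        + (if i + j = (k - 2) / 2 then 1 else 0)) :
    (∀ j : ℕ, 1 ≤ j → j ≤ (k - 6) / 4 →
        A ((k - 2) / 4) j + A ((k - 2) / 4) ((k - 2) / 2 - j) = 0)
    ∧ A ((k - 2) / 4) ((k - 2) / 4) = 1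
    ∧ (∀ j : ℕ, (k + 2) / 4 ≤ j → j ≤ (k - 4) / 2 →
        -A ((k - 2) / 4) j + A ((k - 2) / 4) ((k - 2) / 2 - j) = 0) := by
  obtain ⟨m, rfl⟩ : ∃ m, k = 4 * m + 2 := ⟨k / 4, by omega⟩
  have hm : (4 * m + 2 - 2) / 4 = m := by omega
  have hrow (j : ℕ) : A m j = if j = m then 1 else 0 := by
    rw [hA, middle_row_eq_indicator rfl]
  simp only [hm, hrow]
  refine ⟨fun j hj₁ hj₂ => ?_, if_pos trivial, fun j hj₁ hj₂ => ?_⟩ <;>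
    rw [if_neg (by omega), if_neg (by omega)] <;> simp

theorem middle_row_computation
    (k : ℕ) (hk : 12 ≤ k) (hk4 : k % 4 = 2)
    (A : ℕ → ℕ → ℚ)
    (hA : ∀ i j : ℕ, A i j = (Nat.choose (2 * j) (2 * i) : ℚ)
        - (Nat.choose (2 * j) (k - 2 - 2 * i) : ℚ)
        + (if i + j = (k - 2) / 2 then 1 else 0)) :
    (∀ j : ℕ, 1 ≤ j → j ≤ (k - 6) / 4 →
        A ((k - 2) / 4) j + A ((k - 2) / 4) ((k - 2) / 2 - j) = 0)
    ∧ A ((k - 2) / 4) ((k - 2) / 4) = 1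
    ∧ (∀ j : ℕ, (k + 2) / 4 ≤ j → j ≤ (k - 4) / 2 →
        -A ((k - 2) / 4) j + A ((k - 2) / 4) ((k - 2) / 2 - j) = 0) :=
  middle_row_computation_general k hk4 A hA
end
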